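/- Let C₀ > 0 and 0 < ε ≤ 1/(12C₀). Let z₊, z₋ : ℝ × ℝ³ → ℝ³ be smooth with ‖z₊‖_{L∞} ≤ 1/2 and ‖z₋‖_{L∞} ≤ 1/2, set Z₊ = z₊ + B₀ and Z₋ = z₋ − B₀ with complete flows ψ₊, ψ₋ (∂ₜψ_±(t,y) = Z_±(t, ψ_±(t,y)), ψ_±(0,y) = y). Let u_∓ : ℝ × ℝ³ → ℝ be a smooth solution of (∂ₜ + Z_∓·∇)u_∓ = 0 whose spatial gradient satisfies |∇u_∓(t,x) − e₃| ≤ 2C₀ε for all (t,x), where e₃ = (0,0,1). Then along the opposite characteristic flow the derivative d/dτ [u_∓(τ, ψ_±(τ,y))] equals ( ±2 ∂₃u_∓ + (z_± − z_∓)·∇u_∓ )(τ, ψ_±(τ,y)), and satisfies the transversality lower bound | d/dτ [u_∓(τ, ψ_±(τ,y))] | ≥ 1 − 6C₀ε ≥ 1/2 for all τ and y. -/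

import Mathlib

/-! Along the flow of `Z_±`, the transport equation `(∂ₜ + Z_∓·∇)u_∓ = 0` turns the chain rule into
`d/dτ u_∓(τ, ψ_±) = (Z_± − Z_∓)·∇u_∓ = (±2B₀ + z_± − z_∓)·∇u_∓`. Since `|z_± − z_∓| ≤ 1`, pairing
`2B₀ + d` (with `|d| ≤ 1`) against `B₀` gives at least `1`, and against `∇u_∓ − B₀` at most
`3 · 2C₀ε` in absolute value. -/

open MeasureTheory Real Filter

noncomputable section

/-- Physical space `ℝ³` with its Euclidean structure. -/
abbrev V3 : Type := EuclideanSpace ℝ (Fin 3)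

/-- Spatial partial derivative `∂ᵢ` in the `i`-th coordinate direction. -/
noncomputable def pd (i : Fin 3) (f : V3 → ℝ) (x : V3) : ℝ :=
  fderiv ℝ f x (EuclideanSpace.single i 1)

/-- The background magnetic field `B₀ = (0,0,1)` (also the unit vector `e₃`). -/
noncomputable def B0 : V3 := WithLp.toLp 2 fun (i : Fin 3) => if i = 2 then 1 else 0

/-- The spatial gradient of a scalar function. -/
noncomputable def gradv (f : V3 → ℝ) (x : V3) : V3 := WithLp.toLp 2 fun (i : Fin 3) => pd i f x

/-- Spatial divergence of a vector field: `div v = ∂₁v¹ + ∂₂v² + ∂₃v³`. -/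
noncomputable def divg (v : V3 → V3) (x : V3) : ℝ := ∑ i, pd i (fun y => v y i) x

/-- Curl of a vector field:
`curl v = (∂₂v³ − ∂₃v², ∂₃v¹ − ∂₁v³, ∂₁v² − ∂₂v¹)`. -/
noncomputable def curlv (v : V3 → V3) (x : V3) : V3 := WithLp.toLp 2 fun (k : Fin 3) =>
  if k = 0 then pd 1 (fun y => v y 2) x - pd 2 (fun y => v y 1) x
  else if k = 1 then pd 2 (fun y => v y 0) x - pd 0 (fun y => v y 2) x
  else pd 0 (fun y => v y 1) x - pd 1 (fun y => v y 0) x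

/-- Joint (time and space) smoothness of a time-dependent vector field. -/
def Smooth2V (z : ℝ → V3 → V3) : Prop := ContDiff ℝ (⊤ : ℕ∞) (fun q : ℝ × V3 => z q.1 q.2)

/-- Joint (time and space) smoothness of a time-dependent scalar function. -/
def Smooth2S (f : ℝ → V3 → ℝ) : Prop := ContDiff ℝ (⊤ : ℕ∞) (fun q : ℝ × V3 => f q.1 q.2)

/-- The ideal incompressible MHD system in Elsässer (fluctuation) form:
`∂ₜz₊ + (z₋ − B₀)·∇z₊ = −∇p`, `∂ₜz₋ + (z₊ + B₀)·∇z₋ = −∇p`, `div z₊ = div z₋ = 0`. -/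
def IsMHD (zp zm : ℝ → V3 → V3) (p : ℝ → V3 → ℝ) : Prop :=
  (∀ t x i, deriv (fun s => zp s x i) t
      + ∑ j, (zm t x j - B0 j) * pd j (fun y => zp t y i) x = - pd i (p t) x) ∧
  (∀ t x i, deriv (fun s => zm s x i) t
      + ∑ j, (zp t x j + B0 j) * pd j (fun y => zm t y i) x = - pd i (p t) x) ∧
  (∀ t x, divg (zp t) x = 0) ∧
  (∀ t x, divg (zm t) x = 0)

/-- The Elsässer variable `Z₊ = z₊ + B₀`. -/
noncomputable def Zplus (zp : ℝ → V3 → V3) : ℝ → V3 → V3 := fun t x => zp t x + B0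

/-- The Elsässer variable `Z₋ = z₋ − B₀`. -/
noncomputable def Zminus (zm : ℝ → V3 → V3) : ℝ → V3 → V3 := fun t x => zm t x - B0

/-- `ψ` is the (complete) flow of the time-dependent vector field `Z`. -/
def IsFlowOf (Z : ℝ → V3 → V3) (ψ : ℝ → V3 → V3) : Prop :=
  (∀ y, ψ 0 y = y) ∧ ∀ t y, HasDerivAt (fun s => ψ s y) (Z t (ψ t y)) t

/-- The future scattering field `z(+∞;y) = z(0,y) − ∫₀^{+∞} (∇p·√(1+|Zo|²))(τ, ψ(τ,y)) dτ`,
where `Zo` is the opposite Elsässer variable and `ψ` its flow. -/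
noncomputable def scatFuture (z : ℝ → V3 → V3) (p : ℝ → V3 → ℝ) (Zo : ℝ → V3 → V3)
    (ψ : ℝ → V3 → V3) (y : V3) : V3 :=
  z 0 y - ∫ τ in Set.Ioi (0:ℝ), Real.sqrt (1 + ‖Zo τ (ψ τ y)‖^2) • gradv (p τ) (ψ τ y)

/-- The past scattering field `z(−∞;y) = z(0,y) − ∫₀^{−∞} (∇p·√(1+|Zo|²))(τ, ψ(τ,y)) dτ`. -/
noncomputable def scatPast (z : ℝ → V3 → V3) (p : ℝ → V3 → ℝ) (Zo : ℝ → V3 → V3)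
    (ψ : ℝ → V3 → V3) (y : V3) : V3 :=
  z 0 y + ∫ τ in Set.Iio (0:ℝ), Real.sqrt (1 + ‖Zo τ (ψ τ y)‖^2) • gradv (p τ) (ψ τ y)

/-- Iterated partial derivative `∂^β = ∂₁^{β 0} ∂₂^{β 1} ∂₃^{β 2}` for a multi-index `β`. -/
noncomputable def mD (β : Fin 3 → ℕ) (f : V3 → ℝ) : V3 → ℝ :=
  (pd 0)^[β 0] ((pd 1)^[β 1] ((pd 2)^[β 2] f))

/-- `D` is the `β`-th weak (distributional) derivative of `F` (componentwise). -/
def IsWeakDeriv (β : Fin 3 → ℕ) (F D : V3 → V3) : Prop :=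
  ∀ φ : V3 → ℝ, ContDiff ℝ (⊤ : ℕ∞) φ → HasCompactSupport φ → ∀ i : Fin 3,
    ∫ y : V3, F y i * mD β φ y = (-1 : ℝ)^(β 0 + β 1 + β 2) * ∫ y : V3, D y i * φ y

/-- The finite set of spatial multi-indices of total order at most `N`. -/
def mIdx (N : ℕ) : Finset (Fin 3 → ℕ) :=
  (Fintype.piFinset fun _ : Fin 3 => Finset.range (N+1)).filter fun β => β 0 + β 1 + β 2 ≤ N

/-- The squared weighted Sobolev norm
`‖F‖²_{H^N_ω} = Σ_{|β| ≤ N} ∫ (R² + y₃²)^ω |∂^β F(y)|² dy` (for classically differentiable `F`). -/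
noncomputable def HSobSq (N : ℕ) (R ω : ℝ) (F : V3 → V3) : ℝ :=
  ∑ β ∈ mIdx N, ∫ y : V3, (R^2 + (y 2)^2) ^ ω * ∑ i, (mD β (fun z => F z i) y)^2

/-- Schwartz-type decay in the spatial variables, locally uniformly in time. -/
def SchwartzLike (z : ℝ → V3 → V3) : Prop :=
  ∀ (n k : ℕ) (T : ℝ), ∃ C, ∀ τ x, |τ| ≤ T → (1+‖x‖)^n * ‖iteratedFDeriv ℝ k (z τ) x‖ ≤ C

/-- The quadratic source term `Σ_{i,j} ∂ᵢz₋ʲ ∂ⱼz₊ⁱ` of the pressure equation. -/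
noncomputable def qsrc (zp zm : ℝ → V3 → V3) (τ : ℝ) (x : V3) : ℝ :=
  ∑ i, ∑ j, pd i (fun y => zm τ y j) x * pd j (fun y => zp τ y i) x

/-- The Newtonian potential expression for the pressure:
`p(τ,x) = (1/4π) ∫ |x − x'|⁻¹ (Σ_{i,j} ∂ᵢz₋ʲ ∂ⱼz₊ⁱ)(τ,x') dx'`. -/
noncomputable def newt (zp zm : ℝ → V3 → V3) (τ : ℝ) (x : V3) : ℝ :=
  (1/(4*Real.pi)) * ∫ x' : V3, ‖x - x'‖⁻¹ * qsrc zp zm τ x'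

open scoped RealInnerProductSpace

section ChainRule

variable {E F : Type*} [NormedAddCommGroup E] [NormedSpace ℝ E]
  [NormedAddCommGroup F] [NormedSpace ℝ F]

theorem hasDerivAt_comp_curve {u : ℝ → E → F} {γ : ℝ → E} {v : E} {τ : ℝ}
    (hu : DifferentiableAt ℝ (fun q : ℝ × E => u q.1 q.2) (τ, γ τ)) (hγ : HasDerivAt γ v τ) :
    HasDerivAt (fun s => u s (γ s)) (deriv (fun s => u s (γ τ)) τ + fderiv ℝ (u τ) (γ τ) v) τ := by
  set L := fderiv ℝ (fun q : ℝ × E => u q.1 q.2) (τ, γ τ)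
  have hL : HasFDerivAt (fun q : ℝ × E => u q.1 q.2) L (τ, γ τ) := hu.hasFDerivAt
  have htime : HasDerivAt (fun s => u s (γ τ)) (L (1, 0)) τ :=
    hL.comp_hasDerivAt (f := fun s => (s, γ τ)) τ
      ((hasDerivAt_id τ).prodMk (hasDerivAt_const τ (γ τ)))
  have hspace : HasFDerivAt (u τ) (L.comp (.inr ℝ ℝ E)) (γ τ) :=
    hL.comp (γ τ) ((hasFDerivAt_const τ (γ τ)).prodMk (hasFDerivAt_id (γ τ)))
  have hsplit : L (1, v) = L (1, 0) + L (0, v) := by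
    rw [← map_add, Prod.mk_add_mk, add_zero, zero_add]
  rw [htime.deriv, hspace.fderiv]
  exact hsplit ▸ hL.comp_hasDerivAt (f := fun s => (s, γ s)) τ ((hasDerivAt_id τ).prodMk hγ)

theorem hasDerivAt_comp_curve_of_transport {u : ℝ → E → F} {Z W : ℝ → E → E} {γ : ℝ → E}
    {τ : ℝ} (hu : DifferentiableAt ℝ (fun q : ℝ × E => u q.1 q.2) (τ, γ τ))
    (hγ : HasDerivAt γ (Z τ (γ τ)) τ)
    (htr : deriv (fun s => u s (γ τ)) τ + fderiv ℝ (u τ) (γ τ) (W τ (γ τ)) = 0) :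
    HasDerivAt (fun s => u s (γ s)) (fderiv ℝ (u τ) (γ τ) (Z τ (γ τ) - W τ (γ τ))) τ := by
  convert hasDerivAt_comp_curve hu hγ using 1
  rw [map_sub, eq_neg_of_add_eq_zero_left htr]
  abel

end ChainRule

theorem one_sub_three_mul_le_inner_two_smul_add {H : Type*} [NormedAddCommGroup H]
    [InnerProductSpace ℝ H] {e d G : H} {δ : ℝ} (he : ‖e‖ = 1) (hd : ‖d‖ ≤ 1)
    (hG : ‖G - e‖ ≤ δ) : 1 - 3 * δ ≤ ⟪(2 : ℝ) • e + d, G⟫ := by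
  have hde : -1 ≤ ⟪d, e⟫ := by
    refine neg_le_of_abs_le ((abs_real_inner_le_norm d e).trans ?_)
    rw [he, mul_one]
    exact hd
  have hw : ‖(2 : ℝ) • e + d‖ ≤ 3 := by
    calc ‖(2 : ℝ) • e + d‖ ≤ ‖(2 : ℝ) • e‖ + ‖d‖ := norm_add_le _ _
      _ ≤ 3 := by rw [norm_smul, he]; norm_num; linarith
  have hrest : -(3 * δ) ≤ ⟪(2 : ℝ) • e + d, G - e⟫ := by
    refine neg_le_of_abs_le ((abs_real_inner_le_norm _ _).trans ?_)
    exact mul_le_mul hw hG (norm_nonneg _) zero_le_three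
  have hsplit : ⟪(2 : ℝ) • e + d, G⟫ = ⟪(2 : ℝ) • e + d, e⟫ + ⟪(2 : ℝ) • e + d, G - e⟫ := by
    rw [← inner_add_right, add_sub_cancel]
  have hunit : ⟪(2 : ℝ) • e + d, e⟫ = 2 + ⟪d, e⟫ := by
    rw [inner_add_left, real_inner_smul_left, real_inner_self_eq_norm_sq, he]
    norm_num
  rw [hsplit, hunit]
  linarith

lemma norm_B0 : ‖B0‖ = 1 := by
  have : B0 = EuclideanSpace.single (2 : Fin 3) (1 : ℝ) := by
    ext i; simp [B0, PiLp.single_apply]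
  rw [this, PiLp.norm_single, norm_one]

lemma fderiv_apply_eq_sum_pd (f : V3 → ℝ) (x v : V3) :
    fderiv ℝ f x v = ∑ j, v j * pd j f x := by
  conv_lhs => rw [← (EuclideanSpace.basisFun (Fin 3) ℝ).sum_repr v]
  simp [pd, map_sum, map_smul]

lemma inner_gradv (f : V3 → ℝ) (x v : V3) : ⟪v, gradv f x⟫ = ∑ j, v j * pd j f x := by
  simp [gradv, PiLp.inner_apply, mul_comm]

lemma hasDerivAt_comp_curve_of_transport_pd {u : ℝ → V3 → ℝ} {Z W : ℝ → V3 → V3}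
    {γ : ℝ → V3} {τ : ℝ} (hu : Smooth2S u) (hγ : HasDerivAt γ (Z τ (γ τ)) τ)
    (htr : deriv (fun s => u s (γ τ)) τ + ∑ j, W τ (γ τ) j * pd j (u τ) (γ τ) = 0) :
    HasDerivAt (fun s => u s (γ s)) ⟪Z τ (γ τ) - W τ (γ τ), gradv (u τ) (γ τ)⟫ τ := by
  rw [inner_gradv, ← fderiv_apply_eq_sum_pd]
  rw [← fderiv_apply_eq_sum_pd] at htr
  exact hasDerivAt_comp_curve_of_transport (hu.differentiable (by simp) _) hγ htr

lemma inner_smul_B0_add_sub_gradv (c : ℝ) (a b : V3) (f : V3 → ℝ) (x : V3) :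
    ⟪c • B0 + (a - b), gradv f x⟫ = c * pd 2 f x + ∑ j, (a j - b j) * pd j f x := by
  simp [inner_add_left, real_inner_smul_left, inner_gradv, B0, Fin.sum_univ_three]

lemma Zplus_sub_Zminus (zp zm : ℝ → V3 → V3) (t : ℝ) (x : V3) :
    Zplus zp t x - Zminus zm t x = (2 : ℝ) • B0 + (zp t x - zm t x) := by
  simp only [Zplus, Zminus]
  module

lemma Zminus_sub_Zplus (zp zm : ℝ → V3 → V3) (t : ℝ) (x : V3) :
    Zminus zm t x - Zplus zp t x = (-2 : ℝ) • B0 + (zm t x - zp t x) := by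
  simp only [Zplus, Zminus]
  module

theorem stmt19_transversality_general
    (C₀ ε : ℝ) (hC₀ : 0 < C₀) (hε2 : ε ≤ 1/(12*C₀))
    (zp zm : ℝ → V3 → V3)
    (hbp : ∀ t x, ‖zp t x‖ ≤ 1/2) (hbm : ∀ t x, ‖zm t x‖ ≤ 1/2)
    (ψp ψm : ℝ → V3 → V3)
    (hψp : IsFlowOf (Zplus zp) ψp) (hψm : IsFlowOf (Zminus zm) ψm)
    (up um : ℝ → V3 → ℝ) (hup : Smooth2S up) (hum : Smooth2S um)
    (htp : ∀ t x, deriv (fun s => up s x) t + ∑ j, (zp t x j + B0 j) * pd j (up t) x = 0)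
    (htm : ∀ t x, deriv (fun s => um s x) t + ∑ j, (zm t x j - B0 j) * pd j (um t) x = 0)
    (hgp : ∀ t x, ‖gradv (up t) x - B0‖ ≤ 2*C₀*ε)
    (hgm : ∀ t x, ‖gradv (um t) x - B0‖ ≤ 2*C₀*ε) :
    ∀ (τ : ℝ) (y : V3),
      -- `u₋` along the flow of `Z₊`
      (HasDerivAt (fun s => um s (ψp s y))
          (2 * pd 2 (um τ) (ψp τ y)
            + ∑ j, (zp τ (ψp τ y) j - zm τ (ψp τ y) j) * pd j (um τ) (ψp τ y)) τ ∧
        (1/2 : ℝ) ≤ 1 - 6*C₀*ε ∧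
        1 - 6*C₀*ε ≤
          |2 * pd 2 (um τ) (ψp τ y)
            + ∑ j, (zp τ (ψp τ y) j - zm τ (ψp τ y) j) * pd j (um τ) (ψp τ y)|) ∧
      -- `u₊` along the flow of `Z₋`
      (HasDerivAt (fun s => up s (ψm s y))
          (-2 * pd 2 (up τ) (ψm τ y)
            + ∑ j, (zm τ (ψm τ y) j - zp τ (ψm τ y) j) * pd j (up τ) (ψm τ y)) τ ∧
        1 - 6*C₀*ε ≤
          |-2 * pd 2 (up τ) (ψm τ y)
            + ∑ j, (zm τ (ψm τ y) j - zp τ (ψm τ y) j) * pd j (up τ) (ψm τ y)|) := by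
  intro τ y
  have hsmall : (1/2 : ℝ) ≤ 1 - 6*C₀*ε := by
    rw [le_div_iff₀ (by positivity)] at hε2
    linarith
  have hbound : ∀ (f : V3 → ℝ) x, ‖gradv f x - B0‖ ≤ 2*C₀*ε →
      1 - 6*C₀*ε ≤ |⟪(2 : ℝ) • B0 + (zp τ x - zm τ x), gradv f x⟫| := fun f x hf => by
    have hd : ‖zp τ x - zm τ x‖ ≤ 1 := (norm_sub_le_of_le (hbp τ x) (hbm τ x)).trans_eq (by norm_num)
    linarith [one_sub_three_mul_le_inner_two_smul_add norm_B0 hd hf, le_abs_self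
      ⟪(2 : ℝ) • B0 + (zp τ x - zm τ x), gradv f x⟫]
  have hdm := hasDerivAt_comp_curve_of_transport_pd (W := Zminus zm) hum (hψp.2 τ y) (htm τ _)
  have hdp := hasDerivAt_comp_curve_of_transport_pd (W := Zplus zp) hup (hψm.2 τ y) (htp τ _)
  rw [Zplus_sub_Zminus, inner_smul_B0_add_sub_gradv] at hdm
  rw [Zminus_sub_Zplus, inner_smul_B0_add_sub_gradv] at hdp
  refine ⟨⟨hdm, hsmall, ?_⟩, hdp, ?_⟩
  · rw [← inner_smul_B0_add_sub_gradv]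
    exact hbound _ _ (hgm τ _)
  · rw [← inner_smul_B0_add_sub_gradv, ← abs_neg, ← inner_neg_left,
      show -((-2 : ℝ) • B0 + (zm τ (ψm τ y) - zp τ (ψm τ y)))
        = (2 : ℝ) • B0 + (zp τ (ψm τ y) - zm τ (ψm τ y)) by module]
    exact hbound _ _ (hgp τ _)

/-- Transversality of the characteristic foliations along opposite flows.
Let `0 < ε ≤ 1/(12C₀)`, `‖z_±‖_{L∞} ≤ 1/2`, let `ψ_±` be the complete flows of
`Z_± = z_± ± B₀`, and let `u_∓` solve `(∂ₜ + Z_∓·∇)u_∓ = 0` with `|∇u_∓ − e₃| ≤ 2C₀ε`.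
Then `d/dτ [u_∓(τ, ψ_±(τ,y))] = (±2∂₃u_∓ + (z_± − z_∓)·∇u_∓)(τ, ψ_±(τ,y))` and
`|d/dτ [u_∓(τ, ψ_±(τ,y))]| ≥ 1 − 6C₀ε ≥ 1/2`. -/
theorem stmt19_transversality
    (C₀ ε : ℝ) (hC₀ : 0 < C₀) (hε1 : 0 < ε) (hε2 : ε ≤ 1/(12*C₀))
    (zp zm : ℝ → V3 → V3) (hzp : Smooth2V zp) (hzm : Smooth2V zm)
    (hbp : ∀ t x, ‖zp t x‖ ≤ 1/2) (hbm : ∀ t x, ‖zm t x‖ ≤ 1/2)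
    (ψp ψm : ℝ → V3 → V3)
    (hψp : IsFlowOf (Zplus zp) ψp) (hψm : IsFlowOf (Zminus zm) ψm)
    (up um : ℝ → V3 → ℝ) (hup : Smooth2S up) (hum : Smooth2S um)
    (htp : ∀ t x, deriv (fun s => up s x) t + ∑ j, (zp t x j + B0 j) * pd j (up t) x = 0)
    (htm : ∀ t x, deriv (fun s => um s x) t + ∑ j, (zm t x j - B0 j) * pd j (um t) x = 0)
    (hgp : ∀ t x, ‖gradv (up t) x - B0‖ ≤ 2*C₀*ε)
    (hgm : ∀ t x, ‖gradv (um t) x - B0‖ ≤ 2*C₀*ε) :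
    ∀ (τ : ℝ) (y : V3),
      -- `u₋` along the flow of `Z₊`
      (HasDerivAt (fun s => um s (ψp s y))
          (2 * pd 2 (um τ) (ψp τ y)
            + ∑ j, (zp τ (ψp τ y) j - zm τ (ψp τ y) j) * pd j (um τ) (ψp τ y)) τ ∧
        (1/2 : ℝ) ≤ 1 - 6*C₀*ε ∧
        1 - 6*C₀*ε ≤
          |2 * pd 2 (um τ) (ψp τ y)
            + ∑ j, (zp τ (ψp τ y) j - zm τ (ψp τ y) j) * pd j (um τ) (ψp τ y)|) ∧
      -- `u₊` along the flow of `Z₋`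
      (HasDerivAt (fun s => up s (ψm s y))
          (-2 * pd 2 (up τ) (ψm τ y)
            + ∑ j, (zm τ (ψm τ y) j - zp τ (ψm τ y) j) * pd j (up τ) (ψm τ y)) τ ∧
        1 - 6*C₀*ε ≤
          |-2 * pd 2 (up τ) (ψm τ y)
            + ∑ j, (zm τ (ψm τ y) j - zp τ (ψm τ y) j) * pd j (up τ) (ψm τ y)|) :=
  stmt19_transversality_general C₀ ε hC₀ hε2 zp zm hbp hbm ψp ψm hψp hψm up um hup hum htp htm hgp
    hgm
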